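/- Let H be a bialgebra over a commutative ring R and let τ : H → H be an R-linear involution that is an algebra antimorphism and is either a coalgebra morphism or a coalgebra antimorphism. Let p_1, …, p_k ∈ H be primitive with τ(p_i) = p_i, and let p̄_1, …, p̄_k̄ ∈ H be primitive with τ(p̄_j) = −p̄_j, where k̄ ≥ 1. Write P := Σ_{σ ∈ S_k} p_{σ(1)}⋯p_{σ(k)}. Then for every even integer a ≥ 2: Ψ_a^+(P · p̄_1⋯p̄_k̄) = 0 and Ψ_a^−(p̄_1⋯p̄_k̄ · P) = 0. -/

import Mathlib

open TensorProduct

/-- Convolution product `f * g := m ∘ (f ⊗ g) ∘ Δ` of linear endomorphisms of a bialgebra. -/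
noncomputable def convProd {R H : Type*} [CommRing R] [Ring H] [Bialgebra R H]
    (f g : H →ₗ[R] H) : H →ₗ[R] H :=
  LinearMap.mul' R H ∘ₗ TensorProduct.map f g ∘ₗ Coalgebra.comul

/-- `PsiAux τ n = (Ψ_{n+1}^+, Ψ_{n+1}^−)`: the hyperoctahedral riffle-shuffle operators,
defined by `Ψ_1^+ = id`, `Ψ_1^− = τ`, `Ψ_{a+1}^+ = id * Ψ_a^−`, `Ψ_{a+1}^− = τ * Ψ_a^+`. -/
noncomputable def PsiAux {R H : Type*} [CommRing R] [Ring H] [Bialgebra R H]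
    (τ : H →ₗ[R] H) : ℕ → (H →ₗ[R] H) × (H →ₗ[R] H)
  | 0 => (LinearMap.id, τ)
  | n + 1 => (convProd LinearMap.id (PsiAux τ n).2, convProd τ (PsiAux τ n).1)

/-- The operator `Ψ_a^+` (for `a ≥ 1`). -/
noncomputable def PsiPlus {R H : Type*} [CommRing R] [Ring H] [Bialgebra R H]
    (τ : H →ₗ[R] H) (a : ℕ) : H →ₗ[R] H := (PsiAux τ (a - 1)).1

/-- The operator `Ψ_a^−` (for `a ≥ 1`). -/
noncomputable def PsiMinus {R H : Type*} [CommRing R] [Ring H] [Bialgebra R H]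
    (τ : H →ₗ[R] H) (a : ℕ) : H →ₗ[R] H := (PsiAux τ (a - 1)).2

/-- `p` is a primitive element: `Δ p = 1 ⊗ p + p ⊗ 1`. -/
def IsPrimitive (R : Type*) {H : Type*} [CommRing R] [Ring H] [Bialgebra R H] (p : H) : Prop :=
  Coalgebra.comul (R := R) p = 1 ⊗ₜ[R] p + p ⊗ₜ[R] 1

/-- `τ` is a coalgebra morphism: `Δ ∘ τ = (τ ⊗ τ) ∘ Δ` and `ε ∘ τ = ε`. -/
def IsCoalgMorph {R H : Type*} [CommRing R] [Ring H] [Bialgebra R H] (τ : H →ₗ[R] H) : Prop :=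
  Coalgebra.comul ∘ₗ τ = TensorProduct.map τ τ ∘ₗ (Coalgebra.comul : H →ₗ[R] H ⊗[R] H) ∧
    Coalgebra.counit ∘ₗ τ = (Coalgebra.counit : H →ₗ[R] R)

/-- `τ` is a coalgebra antimorphism: `Δ ∘ τ = swap ∘ (τ ⊗ τ) ∘ Δ` and `ε ∘ τ = ε`. -/
def IsCoalgAntimorph {R H : Type*} [CommRing R] [Ring H] [Bialgebra R H] (τ : H →ₗ[R] H) : Prop :=
  Coalgebra.comul ∘ₗ τ =
      (TensorProduct.comm R H H).toLinearMap ∘ₗ TensorProduct.map τ τ ∘ₗ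
        (Coalgebra.comul : H →ₗ[R] H ⊗[R] H) ∧
    Coalgebra.counit ∘ₗ τ = (Coalgebra.counit : H →ₗ[R] R)

/-!
Fix a primitive `q` with `τ q = -q` (the last `p̄` for the first claim, the first `p̄` for the
second). Since `Δ (z q) = Δ z · (1 ⊗ q + q ⊗ 1)`, the convolution satisfies
`(g * f) ∘ R_q = (g ∘ R_q) * f + g * (f ∘ R_q)` and likewise for left multiplication `L_q`, while
`g * (L_q ∘ f) = (R_q ∘ g) * f` and `τ ∘ R_q = -(L_q ∘ τ)`, `τ ∘ L_q = -(R_q ∘ τ)`. Hence the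
relations `Ψ⁺ ∘ L_q = L_q ∘ Ψ⁺`, `Ψ⁻ ∘ R_q = -(L_q ∘ Ψ⁻)` (true for `a = 1`) and
`Ψ⁺ ∘ R_q = 0`, `Ψ⁻ ∘ L_q = 0` imply each other in turn as `a` increases, the latter holding for
every even `a`.
-/

open LinearMap (mulLeft mulRight)

section Convolution

variable {R H : Type*} [CommRing R] [Ring H] [Bialgebra R H]

lemma convProd_neg_left (g f : H →ₗ[R] H) : convProd (-g) f = -convProd g f := by
  have : TensorProduct.map (-g) f = -TensorProduct.map g f := by ext; simp [TensorProduct.neg_tmul]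
  simp [convProd, this]

lemma convProd_neg_right (g f : H →ₗ[R] H) : convProd g (-f) = -convProd g f := by
  have : TensorProduct.map g (-f) = -TensorProduct.map g f := by ext; simp [TensorProduct.tmul_neg]
  simp [convProd, this]

lemma convProd_zero_right (g : H →ₗ[R] H) : convProd g 0 = 0 := by
  simp [convProd]

lemma convProd_mulLeft_comp (q : H) (g f : H →ₗ[R] H) :
    convProd (mulLeft R q ∘ₗ g) f = mulLeft R q ∘ₗ convProd g f := by
  have : LinearMap.mul' R H ∘ₗ TensorProduct.map (mulLeft R q ∘ₗ g) f =
      mulLeft R q ∘ₗ LinearMap.mul' R H ∘ₗ TensorProduct.map g f := by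
    ext; simp [mul_assoc]
  simp only [convProd, ← LinearMap.comp_assoc, this]

lemma convProd_comp_mulLeft_comp (q : H) (g f : H →ₗ[R] H) :
    convProd g (mulLeft R q ∘ₗ f) = convProd (mulRight R q ∘ₗ g) f := by
  have : LinearMap.mul' R H ∘ₗ TensorProduct.map g (mulLeft R q ∘ₗ f) =
      LinearMap.mul' R H ∘ₗ TensorProduct.map (mulRight R q ∘ₗ g) f := by
    ext; simp [mul_assoc]
  simp only [convProd, ← LinearMap.comp_assoc, this]

variable {q : H}

lemma convProd_comp_mulRight (hq : IsPrimitive R q) (g f : H →ₗ[R] H) :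
    convProd g f ∘ₗ mulRight R q =
      convProd (g ∘ₗ mulRight R q) f + convProd g (f ∘ₗ mulRight R q) := by
  ext z
  simp only [convProd, LinearMap.comp_apply, LinearMap.add_apply, LinearMap.mulRight_apply,
    Bialgebra.comul_mul, show Coalgebra.comul q = _ from hq]
  induction (Coalgebra.comul z : H ⊗[R] H) using TensorProduct.induction_on with
  | zero => simp
  | tmul x y => simp [mul_add, Algebra.TensorProduct.tmul_mul_tmul, add_comm]
  | add s t hs ht => simp only [add_mul, map_add, hs, ht]; abel

lemma convProd_comp_mulLeft (hq : IsPrimitive R q) (g f : H →ₗ[R] H) :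
    convProd g f ∘ₗ mulLeft R q =
      convProd (g ∘ₗ mulLeft R q) f + convProd g (f ∘ₗ mulLeft R q) := by
  ext z
  simp only [convProd, LinearMap.comp_apply, LinearMap.add_apply, LinearMap.mulLeft_apply,
    Bialgebra.comul_mul, show Coalgebra.comul q = _ from hq]
  induction (Coalgebra.comul z : H ⊗[R] H) using TensorProduct.induction_on with
  | zero => simp
  | tmul x y => simp [add_mul, Algebra.TensorProduct.tmul_mul_tmul, add_comm]
  | add s t hs ht => simp only [mul_add, map_add, hs, ht]; abel

end Convolution

section Riffle

variable {R H : Type*} [CommRing R] [Ring H] [Bialgebra R H] {τ f : H →ₗ[R] H} {q : H}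

lemma comp_mulRight_eq_neg_of_antimul (halgmul : ∀ x y : H, τ (x * y) = τ y * τ x) (hqneg : τ q = -q) :
    τ ∘ₗ mulRight R q = -(mulLeft R q ∘ₗ τ) := by
  ext x
  simp [halgmul, hqneg]

lemma comp_mulLeft_eq_neg_of_antimul (halgmul : ∀ x y : H, τ (x * y) = τ y * τ x) (hqneg : τ q = -q) :
    τ ∘ₗ mulLeft R q = -(mulRight R q ∘ₗ τ) := by
  ext x
  simp [halgmul, hqneg]

lemma convProd_id_comp_mulRight_eq_zero (hq : IsPrimitive R q)
    (hf : f ∘ₗ mulRight R q = -(mulLeft R q ∘ₗ f)) :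
    convProd LinearMap.id f ∘ₗ mulRight R q = 0 := by
  rw [convProd_comp_mulRight hq, hf, convProd_neg_right, convProd_comp_mulLeft_comp,
    LinearMap.id_comp, LinearMap.comp_id, add_neg_cancel]

lemma convProd_comp_mulLeft_eq_zero (hq : IsPrimitive R q)
    (hτ : τ ∘ₗ mulLeft R q = -(mulRight R q ∘ₗ τ)) (hf : f ∘ₗ mulLeft R q = mulLeft R q ∘ₗ f) :
    convProd τ f ∘ₗ mulLeft R q = 0 := by
  rw [convProd_comp_mulLeft hq, hτ, hf, convProd_neg_left, convProd_comp_mulLeft_comp,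
    neg_add_cancel]

lemma convProd_comp_mulRight_of_eq_zero (hq : IsPrimitive R q)
    (hτ : τ ∘ₗ mulRight R q = -(mulLeft R q ∘ₗ τ)) (hf : f ∘ₗ mulRight R q = 0) :
    convProd τ f ∘ₗ mulRight R q = -(mulLeft R q ∘ₗ convProd τ f) := by
  rw [convProd_comp_mulRight hq, hτ, hf, convProd_neg_left, convProd_zero_right, add_zero,
    convProd_mulLeft_comp]

lemma convProd_id_comp_mulLeft_of_eq_zero (hq : IsPrimitive R q)
    (hf : f ∘ₗ mulLeft R q = 0) :
    convProd LinearMap.id f ∘ₗ mulLeft R q = mulLeft R q ∘ₗ convProd LinearMap.id f := by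
  rw [convProd_comp_mulLeft hq, hf, convProd_zero_right, add_zero, ← convProd_mulLeft_comp,
    LinearMap.comp_id, LinearMap.id_comp]

lemma psiAux_succ_comp_eq_zero (hq : IsPrimitive R q)
    (hL : τ ∘ₗ mulLeft R q = -(mulRight R q ∘ₗ τ)) {n : ℕ}
    (h : (PsiAux τ n).1 ∘ₗ mulLeft R q = mulLeft R q ∘ₗ (PsiAux τ n).1 ∧
      (PsiAux τ n).2 ∘ₗ mulRight R q = -(mulLeft R q ∘ₗ (PsiAux τ n).2)) :
    (PsiAux τ (n + 1)).1 ∘ₗ mulRight R q = 0 ∧ (PsiAux τ (n + 1)).2 ∘ₗ mulLeft R q = 0 :=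
  ⟨convProd_id_comp_mulRight_eq_zero hq h.2, convProd_comp_mulLeft_eq_zero hq hL h.1⟩

lemma psiAux_succ_comp_eq_mulLeft_comp (hq : IsPrimitive R q)
    (hR : τ ∘ₗ mulRight R q = -(mulLeft R q ∘ₗ τ)) {n : ℕ}
    (h : (PsiAux τ n).1 ∘ₗ mulRight R q = 0 ∧ (PsiAux τ n).2 ∘ₗ mulLeft R q = 0) :
    (PsiAux τ (n + 1)).1 ∘ₗ mulLeft R q = mulLeft R q ∘ₗ (PsiAux τ (n + 1)).1 ∧
      (PsiAux τ (n + 1)).2 ∘ₗ mulRight R q = -(mulLeft R q ∘ₗ (PsiAux τ (n + 1)).2) :=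
  ⟨convProd_id_comp_mulLeft_of_eq_zero hq h.2, convProd_comp_mulRight_of_eq_zero hq hR h.1⟩

lemma psiAux_two_mul_add_one_comp_eq_zero (hq : IsPrimitive R q)
    (hR : τ ∘ₗ mulRight R q = -(mulLeft R q ∘ₗ τ))
    (hL : τ ∘ₗ mulLeft R q = -(mulRight R q ∘ₗ τ)) (m : ℕ) :
    (PsiAux τ (2 * m + 1)).1 ∘ₗ mulRight R q = 0 ∧
      (PsiAux τ (2 * m + 1)).2 ∘ₗ mulLeft R q = 0 := by
  induction m with
  | zero => exact psiAux_succ_comp_eq_zero hq hL ⟨rfl, hR⟩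
  | succ m ih =>
    exact psiAux_succ_comp_eq_zero hq hL (psiAux_succ_comp_eq_mulLeft_comp hq hR ih)

lemma psi_comp_eq_zero_of_even (halgmul : ∀ x y : H, τ (x * y) = τ y * τ x)
    (hq : IsPrimitive R q) (hqneg : τ q = -q) {a : ℕ} (ha : 2 ≤ a) (haeven : Even a) :
    PsiPlus τ a ∘ₗ mulRight R q = 0 ∧ PsiMinus τ a ∘ₗ mulLeft R q = 0 := by
  obtain ⟨m, rfl⟩ : ∃ m, a = 2 * m + 2 := by
    obtain ⟨t, rfl⟩ := haeven
    exact ⟨t - 1, by omega⟩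
  exact psiAux_two_mul_add_one_comp_eq_zero hq (comp_mulRight_eq_neg_of_antimul halgmul hqneg)
    (comp_mulLeft_eq_neg_of_antimul halgmul hqneg) m

end Riffle

theorem flip_riffle_even_kernel_general
    {R H : Type*} [CommRing R] [Ring H] [Bialgebra R H]
    (τ : H →ₗ[R] H)
    (halgmul : ∀ x y : H, τ (x * y) = τ y * τ x)
    (k : ℕ) (p : Fin k → H)
    (kb : ℕ) (hkb : 1 ≤ kb)
    (pbar : Fin kb → H) (hpbar : ∀ j, IsPrimitive R (pbar j))
    (hpbarneg : ∀ j, τ (pbar j) = -(pbar j))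
    (a : ℕ) (ha : 2 ≤ a) (haeven : Even a) :
    PsiPlus τ a
        ((∑ σ : Equiv.Perm (Fin k), (List.ofFn fun i => p (σ i)).prod) *
          (List.ofFn pbar).prod) = 0 ∧
    PsiMinus τ a
        ((List.ofFn pbar).prod *
          (∑ σ : Equiv.Perm (Fin k), (List.ofFn fun i => p (σ i)).prod)) = 0 := by
  obtain ⟨n, rfl⟩ : ∃ n, kb = n + 1 := ⟨kb - 1, by omega⟩
  have hlast := psi_comp_eq_zero_of_even halgmul (hpbar (Fin.last n)) (hpbarneg _) ha haeven
  have hfirst := psi_comp_eq_zero_of_even halgmul (hpbar 0) (hpbarneg _) ha haeven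
  constructor
  · rw [List.ofFn_succ', List.prod_concat, ← mul_assoc]
    exact LinearMap.congr_fun hlast.1 _
  · rw [List.ofFn_succ, List.prod_cons, mul_assoc]
    exact LinearMap.congr_fun hfirst.2 _

/-- `τ` a linear involution on a bialgebra `H`, an algebra antimorphism and
coalgebra (anti)morphism; `p_1,…,p_k` `τ`-invariant primitives, `p̄_1,…,p̄_k̄` `τ`-negating
primitives with `k̄ ≥ 1`, `P` the symmetrised product of the `p_i`. Then for every even
`a ≥ 2`: `Ψ_a^+(P·p̄_1⋯p̄_k̄) = 0` and `Ψ_a^−(p̄_1⋯p̄_k̄·P) = 0`. -/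
theorem flip_riffle_even_kernel
    {R H : Type*} [CommRing R] [Ring H] [Bialgebra R H]
    (τ : H →ₗ[R] H)
    (hinv : ∀ x, τ (τ x) = x)
    (halg1 : τ 1 = 1) (halgmul : ∀ x y : H, τ (x * y) = τ y * τ x)
    (hco : IsCoalgMorph τ ∨ IsCoalgAntimorph τ)
    (k : ℕ) (p : Fin k → H) (hp : ∀ i, IsPrimitive R (p i)) (hpfix : ∀ i, τ (p i) = p i)
    (kb : ℕ) (hkb : 1 ≤ kb)
    (pbar : Fin kb → H) (hpbar : ∀ j, IsPrimitive R (pbar j))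
    (hpbarneg : ∀ j, τ (pbar j) = -(pbar j))
    (a : ℕ) (ha : 2 ≤ a) (haeven : Even a) :
    PsiPlus τ a
        ((∑ σ : Equiv.Perm (Fin k), (List.ofFn fun i => p (σ i)).prod) *
          (List.ofFn pbar).prod) = 0 ∧
    PsiMinus τ a
        ((List.ofFn pbar).prod *
          (∑ σ : Equiv.Perm (Fin k), (List.ofFn fun i => p (σ i)).prod)) = 0 :=
  flip_riffle_even_kernel_general τ halgmul k p kb hkb pbar hpbar hpbarneg a ha haeven
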